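/- arXiv:1510.05502 — 5 statements merged into one kernel-verified Lean document; each statement's English description precedes it below -/
import Mathlib

section
/- For every signed graph (H,Π), there exists an s-homomorphism from the switching graph P(H,Π) to (H,Π) given by the projection v_{i,j} ↦ v_i. Consequently, if a signed graph (G,Σ) admits an ec-homomorphism to P(H,Π), then (G,Σ) admits an s-homomorphism to (H,Π). -/
structure SignedGraph (V : Type*) where
  pos : V → V → Prop
  neg : V → V → Prop
  pos_symm : ∀ {a b}, pos a b → pos b a
  neg_symm : ∀ {a b}, neg a b → neg b a

/-- Switching the signed graph `G` on the vertex set `X`: edges with exactly one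
endpoint in `X` change sign; other edges (including loops) keep their sign. -/
def SignedGraph.switch {V : Type*} (G : SignedGraph V) (X : Set V) : SignedGraph V where
  pos a b := (((a ∈ X) ↔ (b ∈ X)) ∧ G.pos a b) ∨ (¬((a ∈ X) ↔ (b ∈ X)) ∧ G.neg a b)
  neg a b := (((a ∈ X) ↔ (b ∈ X)) ∧ G.neg a b) ∨ (¬((a ∈ X) ↔ (b ∈ X)) ∧ G.pos a b)
  pos_symm := by
    rintro a b (⟨h1, h2⟩ | ⟨h1, h2⟩)
    · exact Or.inl ⟨h1.symm, G.pos_symm h2⟩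
    · exact Or.inr ⟨fun hc => h1 hc.symm, G.neg_symm h2⟩
  neg_symm := by
    rintro a b (⟨h1, h2⟩ | ⟨h1, h2⟩)
    · exact Or.inl ⟨h1.symm, G.neg_symm h2⟩
    · exact Or.inr ⟨fun hc => h1 hc.symm, G.pos_symm h2⟩

/-- An ec-homomorphism: a vertex mapping preserving adjacency and edge signs. -/
def IsEcHom {V W : Type*} (G : SignedGraph V) (H : SignedGraph W) (f : V → W) : Prop :=
  (∀ a b, G.pos a b → H.pos (f a) (f b)) ∧ (∀ a b, G.neg a b → H.neg (f a) (f b))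

/-- An s-homomorphism: an ec-homomorphism after switching the source on some vertex set. -/
def IsSHom {V W : Type*} (G : SignedGraph V) (H : SignedGraph W) (f : V → W) : Prop :=
  ∃ X : Set V, IsEcHom (G.switch X) H f

/-- The switching graph `P(G,Σ)`: two copies of each vertex; edges between copies with
equal second component keep the sign, the cross edges get the opposite sign. -/
def switchGraph {V : Type*} (G : SignedGraph V) : SignedGraph (V × Bool) where
  pos p q := (p.2 = q.2 ∧ G.pos p.1 q.1) ∨ (p.2 ≠ q.2 ∧ G.neg p.1 q.1)
  neg p q := (p.2 = q.2 ∧ G.neg p.1 q.1) ∨ (p.2 ≠ q.2 ∧ G.pos p.1 q.1)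
  pos_symm := by
    rintro a b (⟨h1, h2⟩ | ⟨h1, h2⟩)
    · exact Or.inl ⟨h1.symm, G.pos_symm h2⟩
    · exact Or.inr ⟨h1.symm, G.neg_symm h2⟩
  neg_symm := by
    rintro a b (⟨h1, h2⟩ | ⟨h1, h2⟩)
    · exact Or.inl ⟨h1.symm, G.neg_symm h2⟩
    · exact Or.inr ⟨h1.symm, G.pos_symm h2⟩

lemma ecHom_switch_comp {U V W : Type*} (G : SignedGraph U) (G' : SignedGraph V)
    (H : SignedGraph W) (f : U → V) (g : V → W)
    (hf : IsEcHom G G' f) (hg : IsSHom G' H g) : IsSHom G H (g ∘ f) := by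
  obtain ⟨X, hXp, hXn⟩ := hg
  refine ⟨f ⁻¹' X, ?_, ?_⟩
  · rintro a b (⟨h1, h2⟩ | ⟨h1, h2⟩)
    · exact hXp _ _ (Or.inl ⟨h1, hf.1 _ _ h2⟩)
    · exact hXp _ _ (Or.inr ⟨h1, hf.2 _ _ h2⟩)
  · rintro a b (⟨h1, h2⟩ | ⟨h1, h2⟩)
    · exact hXn _ _ (Or.inl ⟨h1, hf.2 _ _ h2⟩)
    · exact hXn _ _ (Or.inr ⟨h1, hf.1 _ _ h2⟩)

lemma proj_sHom {V : Type*} (H : SignedGraph V) :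
    IsSHom (switchGraph H) H Prod.fst := by
  refine ⟨{p | p.2 = true}, ?_, ?_⟩
  · rintro ⟨a, i⟩ ⟨b, j⟩ (⟨h1, (⟨h2, h3⟩ | ⟨h2, h3⟩)⟩ | ⟨h1, (⟨h2, h3⟩ | ⟨h2, h3⟩)⟩) <;>
      simp only [Set.mem_setOf_eq] at h1 <;> first
        | exact h3
        | (exfalso; cases i <;> cases j <;> simp_all)
  · rintro ⟨a, i⟩ ⟨b, j⟩ (⟨h1, (⟨h2, h3⟩ | ⟨h2, h3⟩)⟩ | ⟨h1, (⟨h2, h3⟩ | ⟨h2, h3⟩)⟩) <;>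
      simp only [Set.mem_setOf_eq] at h1 <;> first
        | exact h3
        | (exfalso; cases i <;> cases j <;> simp_all)

/-- The projection of the switching graph `P(H,Π)` to `(H,Π)` is an s-homomorphism;
consequently, any signed graph with an ec-homomorphism to `P(H,Π)` admits an
s-homomorphism to `(H,Π)`. -/
theorem stmt4 {V W : Type*} (H : SignedGraph V) :
    IsSHom (switchGraph H) H Prod.fst ∧
    ∀ (G : SignedGraph W), (∃ φ, IsEcHom G (switchGraph H) φ) →
      ∃ ψ, IsSHom G H ψ := by
  refine ⟨proj_sHom H, ?_⟩
  rintro G ⟨φ, hφ⟩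
  exact ⟨Prod.fst ∘ φ, ecHom_switch_comp G _ H φ Prod.fst hφ (proj_sHom H)⟩
end

section
/- Let (G,Σ) and (H,Π) be signed graphs. If there is an s-homomorphism from (G,Σ) to (H,Π), then there is an ec-homomorphism from (G,Σ) to the switching graph P(H,Π). Explicitly, given an ec-homomorphism φ : (G,Σ') → (H,Π) with Σ' obtained from Σ by switching on the vertex set X, the map sending u to (φ(u))_0 if u ∈ X and to (φ(u))_1 otherwise is an ec-homomorphism from (G,Σ) to P(H,Π). -/
open Classical in
/-- If `(G,Σ)` admits an s-homomorphism to `(H,Π)`, then it admits an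
ec-homomorphism to the switching graph `P(H,Π)`; explicitly, from an
ec-homomorphism `φ` of the switching of `(G,Σ)` on `X` to `(H,Π)`, the map
`u ↦ (φ u)_0` for `u ∈ X` and `u ↦ (φ u)_1` otherwise is such an ec-homomorphism. -/
theorem stmt5 {V W : Type*} (G : SignedGraph V) (H : SignedGraph W) :
    ((∃ φ, IsSHom G H φ) → ∃ ψ, IsEcHom G (switchGraph H) ψ) ∧
    ∀ (φ : V → W) (X : Set V), IsEcHom (G.switch X) H φ →
      IsEcHom G (switchGraph H) (fun u => (φ u, if u ∈ X then false else true)) := by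
  constructor
  · rintro ⟨φ, X, hX⟩
    refine ⟨fun u => (φ u, if u ∈ X then false else true), ?_, ?_⟩ <;>
    · intro a b hab
      by_cases h : (a ∈ X) ↔ (b ∈ X)
      · have hb : (if a ∈ X then false else true) = (if b ∈ X then false else true) := by
          by_cases ha : a ∈ X <;> simp [ha, h.mp, (h.symm).mp] <;> tauto
        first
        | exact Or.inl ⟨hb, hX.1 a b (Or.inl ⟨h, hab⟩)⟩
        | exact Or.inl ⟨hb, hX.2 a b (Or.inl ⟨h, hab⟩)⟩
      · have hb : (if a ∈ X then false else true) ≠ (if b ∈ X then false else true) := by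
          by_cases ha : a ∈ X <;> by_cases hb2 : b ∈ X <;> simp [ha, hb2] <;> tauto
        first
        | exact Or.inr ⟨hb, hX.2 a b (Or.inr ⟨h, hab⟩)⟩
        | exact Or.inr ⟨hb, hX.1 a b (Or.inr ⟨h, hab⟩)⟩
  · intro φ X hX
    refine ⟨?_, ?_⟩ <;>
    · intro a b hab
      by_cases h : (a ∈ X) ↔ (b ∈ X)
      · have hb : (if a ∈ X then false else true) = (if b ∈ X then false else true) := by
          by_cases ha : a ∈ X <;> simp [ha] <;> tauto
        first
        | exact Or.inl ⟨hb, hX.1 a b (Or.inl ⟨h, hab⟩)⟩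
        | exact Or.inl ⟨hb, hX.2 a b (Or.inl ⟨h, hab⟩)⟩
      · have hb : (if a ∈ X then false else true) ≠ (if b ∈ X then false else true) := by
          by_cases ha : a ∈ X <;> by_cases hb2 : b ∈ X <;> simp [ha, hb2] <;> tauto
        first
        | exact Or.inr ⟨hb, hX.2 a b (Or.inr ⟨h, hab⟩)⟩
        | exact Or.inr ⟨hb, hX.1 a b (Or.inr ⟨h, hab⟩)⟩
end

section
/- Let (G,Σ) and (H,Π) be signed graphs. There is an ec-homomorphism from (G,Σ) to P(H,Π) if and only if there is an ec-homomorphism from P(G,Σ) to P(H,Π). In particular, if φ : (G,Σ) → P(H,Π) is an ec-homomorphism with φ(u) = v_{i,j}, then the map ψ defined by ψ(u_0) = v_{i,j} and ψ(u_1) = v_{i,1−j} is an ec-homomorphism from P(G,Σ) to P(H,Π). -/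
private lemma bxor1 : ∀ i j x y : Bool, i = j → x = y → xor x i = xor y j := by decide
private lemma bxor2 : ∀ i j x y : Bool, i = j → ¬x = y → ¬xor x i = xor y j := by decide
private lemma bxor3 : ∀ i j x y : Bool, ¬i = j → x = y → ¬xor x i = xor y j := by decide
private lemma bxor4 : ∀ i j x y : Bool, ¬i = j → ¬x = y → xor x i = xor y j := by decide

lemma stmt6_aux {V W : Type*} (G : SignedGraph V) (H : SignedGraph W)
    (φ : V → W × Bool) (hφ : IsEcHom G (switchGraph H) φ) :
    IsEcHom (switchGraph G) (switchGraph H)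
      (fun p => ((φ p.1).1, xor (φ p.1).2 p.2)) := by
  obtain ⟨hp, hn⟩ := hφ
  constructor
  · rintro ⟨a, i⟩ ⟨b, j⟩ (⟨hij, h⟩ | ⟨hij, h⟩) <;>
      [rcases hp a b h with ⟨h2, h3⟩ | ⟨h2, h3⟩; rcases hn a b h with ⟨h2, h3⟩ | ⟨h2, h3⟩]
    · exact Or.inl ⟨bxor1 i j _ _ hij h2, h3⟩
    · exact Or.inr ⟨bxor2 i j _ _ hij h2, h3⟩
    · exact Or.inr ⟨bxor3 i j _ _ hij h2, h3⟩
    · exact Or.inl ⟨bxor4 i j _ _ hij h2, h3⟩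
  · rintro ⟨a, i⟩ ⟨b, j⟩ (⟨hij, h⟩ | ⟨hij, h⟩) <;>
      [rcases hn a b h with ⟨h2, h3⟩ | ⟨h2, h3⟩; rcases hp a b h with ⟨h2, h3⟩ | ⟨h2, h3⟩]
    · exact Or.inl ⟨bxor1 i j _ _ hij h2, h3⟩
    · exact Or.inr ⟨bxor2 i j _ _ hij h2, h3⟩
    · exact Or.inr ⟨bxor3 i j _ _ hij h2, h3⟩
    · exact Or.inl ⟨bxor4 i j _ _ hij h2, h3⟩

/-- There is an ec-homomorphism `(G,Σ) → P(H,Π)` iff there is one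
`P(G,Σ) → P(H,Π)`; explicitly, from `φ : (G,Σ) → P(H,Π)` with `φ u = v_{i,j}`
one gets `ψ` with `ψ(u_0) = v_{i,j}` and `ψ(u_1) = v_{i,1-j}`. -/
theorem stmt6 {V W : Type*} (G : SignedGraph V) (H : SignedGraph W) :
    ((∃ φ, IsEcHom G (switchGraph H) φ) ↔
      (∃ ψ, IsEcHom (switchGraph G) (switchGraph H) ψ)) ∧
    ∀ φ : V → W × Bool, IsEcHom G (switchGraph H) φ →
      IsEcHom (switchGraph G) (switchGraph H)
        (fun p => ((φ p.1).1, xor (φ p.1).2 p.2)) := by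
  refine ⟨⟨?_, ?_⟩, fun φ hφ => stmt6_aux G H φ hφ⟩
  · rintro ⟨φ, hφ⟩
    exact ⟨_, stmt6_aux G H φ hφ⟩
  · rintro ⟨ψ, hψ⟩
    refine ⟨fun v => ψ (v, false), fun a b h => ?_, fun a b h => ?_⟩
    · exact hψ.1 (a, false) (b, false) (Or.inl ⟨rfl, h⟩)
    · exact hψ.2 (a, false) (b, false) (Or.inl ⟨rfl, h⟩)
end

section
/- Let AP be a signed path with vertices h_0, h_1, …, h_t whose edge signs alternate (consecutive edges have opposite signs). Let (G,Σ) be a connected signed graph admitting a surjective ec-homomorphism g onto AP, let h : (H,Π) → AP be an ec-homomorphism, and let f : (G,Σ) → (H,Π) be an ec-homomorphism. If t is even, then for every vertex u of G, g(u) = h(f(u)). -/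
/-- The alternating signed path on vertices `h_0, …, h_t`: `h_i` and `h_{i+1}` are
joined by a single edge, and the signs of consecutive edges alternate (the
parameter `b` fixes the sign of the first edge). -/
def altPath (t : ℕ) (b : Bool) : SignedGraph (Fin (t + 1)) where
  pos i j := (i.val + 1 = j.val ∨ j.val + 1 = i.val) ∧ (Even (min i.val j.val) ↔ b = true)
  neg i j := (i.val + 1 = j.val ∨ j.val + 1 = i.val) ∧ ¬(Even (min i.val j.val) ↔ b = true)
  pos_symm := by rintro a c ⟨h1, h2⟩; exact ⟨h1.symm, by rwa [min_comm]⟩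
  neg_symm := by rintro a c ⟨h1, h2⟩; exact ⟨h1.symm, by rwa [min_comm]⟩

/-- Heights along an alternating path of even length are unique: if `g` is a
surjective ec-homomorphism of a connected signed graph `(G,Σ)` onto the
alternating path, `h` an ec-homomorphism of `(H,Π)` to the path, and `f` an
ec-homomorphism of `(G,Σ)` to `(H,Π)`, then `g u = h (f u)` for every vertex `u`. -/
theorem stmt15 {V W : Type*} (t : ℕ) (ht : Even t) (b : Bool)
    (G : SignedGraph V) (H : SignedGraph W)
    (hconn : ∀ u v : V, Relation.ReflTransGen (fun x y => G.pos x y ∨ G.neg x y) u v)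
    (g : V → Fin (t + 1)) (hg : IsEcHom G (altPath t b) g) (hgs : Function.Surjective g)
    (h : W → Fin (t + 1)) (hh : IsEcHom H (altPath t b) h)
    (f : V → W) (hf : IsEcHom G H f) :
    ∀ u : V, g u = h (f u) := by
  obtain ⟨hgp, hgn⟩ := hg
  obtain ⟨hhp, hhn⟩ := hh
  obtain ⟨hfp, hfn⟩ := hf
  -- Edge lemma: along an edge, differences/sums behave according to parity.
  have edge : ∀ v w, (G.pos v w ∨ G.neg v w) →
      ((g v).val % 2 = (h (f v)).val % 2 →
        ((g w).val : ℤ) - (h (f w)).val = ((g v).val : ℤ) - (h (f v)).val) ∧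
      ((g v).val % 2 ≠ (h (f v)).val % 2 →
        (g w).val + (h (f w)).val = (g v).val + (h (f v)).val) := by
    intro v w hvw
    rcases hvw with h' | h'
    · obtain ⟨a1, a2⟩ := hgp _ _ h'
      obtain ⟨a3, a4⟩ := hhp _ _ (hfp _ _ h')
      have key : Even (min (g v).val (g w).val) ↔
          Even (min (h (f v)).val (h (f w)).val) := a2.trans a4.symm
      rw [Nat.even_iff, Nat.even_iff] at key
      exact ⟨fun hp => by omega, fun hp => by omega⟩
    · obtain ⟨a1, a2⟩ := hgn _ _ h'
      obtain ⟨a3, a4⟩ := hhn _ _ (hfn _ _ h')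
      have key : Even (min (g v).val (g w).val) ↔
          Even (min (h (f v)).val (h (f w)).val) := by
        constructor
        · intro hx
          by_contra hy
          exact a4 (iff_of_true hx (by tauto) |> fun _ => by tauto)
        · intro hx
          by_contra hy
          exact a2 (by tauto)
      rw [Nat.even_iff, Nat.even_iff] at key
      exact ⟨fun hp => by omega, fun hp => by omega⟩
  -- Walk lemma: propagate along reflexive-transitive closure.
  have walk : ∀ u v, Relation.ReflTransGen (fun x y => G.pos x y ∨ G.neg x y) u v →
      ((g u).val % 2 = (h (f u)).val % 2 →
        ((g v).val : ℤ) - (h (f v)).val = ((g u).val : ℤ) - (h (f u)).val) ∧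
      ((g u).val % 2 ≠ (h (f u)).val % 2 →
        (g v).val + (h (f v)).val = (g u).val + (h (f u)).val) := by
    intro u v hrtg
    induction hrtg with
    | refl => exact ⟨fun _ => rfl, fun _ => rfl⟩
    | @tail x y h1 h2 ih =>
      obtain ⟨e1, e2⟩ := edge _ _ h2
      constructor
      · intro hp
        have i1 := ih.1 hp
        have hpmid : (g x).val % 2 = (h (f x)).val % 2 := by omega
        have := e1 hpmid
        omega
      · intro hp
        have i1 := ih.2 hp
        have hpmid : (g x).val % 2 ≠ (h (f x)).val % 2 := by omega
        have := e2 hpmid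
        omega
  intro u
  obtain ⟨v0, hv0⟩ := hgs 0
  obtain ⟨v1, hv1⟩ := hgs (Fin.last t)
  have hn0 : (g v0).val = 0 := by rw [hv0]; simp
  have hn1 : (g v1).val = t := by rw [hv1]; simp
  have hb0 : (h (f v0)).val ≤ t := Nat.lt_succ_iff.mp (h (f v0)).isLt
  have hb1 : (h (f v1)).val ≤ t := Nat.lt_succ_iff.mp (h (f v1)).isLt
  have w0 := walk u v0 (hconn u v0)
  have w1 := walk u v1 (hconn u v1)
  have htm : t % 2 = 0 := Nat.even_iff.mp ht
  have heq : (g u).val = (h (f u)).val := by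
    by_cases hp : (g u).val % 2 = (h (f u)).val % 2
    · have a := w0.1 hp
      have bb := w1.1 hp
      omega
    · have a := w0.2 hp
      have bb := w1.2 hp
      omega
  exact Fin.ext heq
end

section
/- Let (H,Π) be a signed graph containing a negative even cycle of length 2k with k ≥ 2, with signature chosen (after switching) so that the cycle has edges v_1v_2, …, v_{2k−1}v_{2k} positive and v_{2k}v_1 negative. Define the indicator graph P(H,Π)* on vertex set V(P(H,Π)), with an edge between u and v whenever there is a path of length 2 in P(H,Π) from u to v whose first edge is positive and second edge is negative. Then P(H,Π)* contains an odd closed walk, namely v_{1,0}, v_{3,1}, v_{3,0}, v_{5,1}, v_{5,0}, …, v_{2k−1,1}, v_{2k−1,0}, v_{1,0} of length 2k−1. -/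
/-- The indicator graph `P(H,Π)*`: vertices of the switching graph, with `p`
adjacent to `q` when some walk of length two from `p` to `q` uses first a positive
then a negative edge of `P(H,Π)`. -/
def indAdj {V : Type*} (H : SignedGraph V) (p q : V × Bool) : Prop :=
  ∃ w, (switchGraph H).pos p w ∧ (switchGraph H).neg w q

/-- If `(H,Π)` contains a negative even cycle `v_1 v_2 ⋯ v_{2k}` (`k ≥ 2`, with
`c i = v_{i+1}`) whose edges are all positive except the negative edge
`v_{2k} v_1`, then the indicator graph `P(H,Π)*` contains an odd closed walk of
length `2k - 1` through `v_{1,0}`. -/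
theorem stmt16 {V : Type*} (H : SignedGraph V) (k : ℕ) (hk : 2 ≤ k) (c : ℕ → V)
    (hinj : ∀ i j, i < 2 * k → j < 2 * k → c i = c j → i = j)
    (hpos : ∀ i, i + 2 ≤ 2 * k → H.pos (c i) (c (i + 1)))
    (hneg : H.neg (c (2 * k - 1)) (c 0)) :
    Odd (2 * k - 1) ∧
      ∃ wlk : ℕ → V × Bool, wlk 0 = (c 0, false) ∧ wlk (2 * k - 1) = (c 0, false) ∧
        ∀ i, i < 2 * k - 1 → indAdj H (wlk i) (wlk (i + 1)) := by
  refine ⟨⟨k - 1, by omega⟩, ?_⟩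
  refine ⟨fun i => if i % 2 = 0 then (c i, false)
      else if i = 2 * k - 1 then (c 0, false) else (c (i + 1), true), ?_, ?_, ?_⟩
  · simp
  · have h1 : ¬ ((2 * k - 1) % 2 = 0) := by omega
    simp [h1]
  · intro i hi
    rcases Nat.even_or_odd i with he | ho
    · have h0 : i % 2 = 0 := Nat.even_iff.mp he
      have h1 : ¬ ((i + 1) % 2 = 0) := by omega
      by_cases hlast : i + 1 = 2 * k - 1
      · have h2 : ¬ ((2 * k - 1) % 2 = 0) := by omega
        simp only [h0, h1, h2, hlast, if_pos, if_neg, if_true, ite_true, ite_false]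
        refine ⟨(c (2 * k - 1), false), Or.inl ⟨rfl, ?_⟩, Or.inl ⟨rfl, hneg⟩⟩
        have := hpos i (by omega)
        rwa [hlast] at this
      · have ha : i + 2 ≤ 2 * k := by omega
        have hb : (i + 1) + 2 ≤ 2 * k := by omega
        simp only [h0, h1, hlast, if_pos, if_neg, if_true, ite_true, ite_false]
        exact ⟨(c (i + 1), false), Or.inl ⟨rfl, hpos i ha⟩,
          Or.inr ⟨by simp, hpos (i + 1) hb⟩⟩
    · have ho1 : i % 2 = 1 := Nat.odd_iff.mp ho
      have h0 : ¬ (i % 2 = 0) := by omega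
      have h1 : (i + 1) % 2 = 0 := by omega
      have hne : i ≠ 2 * k - 1 := by omega
      simp only [h0, h1, hne, if_pos, if_neg, if_true, ite_true, ite_false]
      refine ⟨(c (i + 2), true), Or.inl ⟨rfl, ?_⟩,
        Or.inr ⟨by simp, H.pos_symm ?_⟩⟩
      · have := hpos (i + 1) (by omega)
        simpa using this
      · have := hpos (i + 1) (by omega)
        simpa using this
end
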